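/- C-orbit convolution theorem (abstract form): Let W ≤ O(n) be finite, F_M ⊂ ℝⁿ finite, ε : F_M → ℝ_{>0}, Λ_M finite, and suppose the discrete orthogonality Σ_{x∈F_M} ε(x) Φ_λ(x) conj(Φ_μ(x)) = N_λ δ_{λμ} holds (N_λ > 0), where Φ_λ(x) = Σ_{w∈W} exp(2πi⟨w(λ),x⟩). Define for f, g : F_M → ℂ extended by interpolation g(y) := Σ_{λ∈Λ_M} G_λ Φ_λ(y) (G_λ the transform coefficients of g), the convolution (f∗g)(u) = Σ_{x∈F_M} ε(x) Σ_{w∈W} f(x) g(u − w(x)). Then (f∗g)(u) = Σ_{λ∈Λ_M} N_λ F_λ G_λ Φ_λ(u), where F_λ, G_λ are the orbit transform coefficients F_λ = (1/N_λ) Σ_{x∈F_M} ε(x) f(x) conj(Φ_λ(x)) and similarly for G_λ. -/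

import Mathlib

/-!
Everything rests on the product formula `∑_w Φ_λ(u - w x) = Φ_λ(u) · conj Φ_λ(x)`: after
expanding both orbit sums, substituting `w' = w v` in the inner sum turns `⟨w' λ, u - w x⟩` into
`⟨w v λ, u⟩ - ⟨v λ, x⟩` because `w` is an isometry, and the double sum over `W` factors.
Summed against the interpolation coefficients `G_λ` and then over `F_M` with weights `ε f`,
each `conj Φ_λ` produces the transform coefficient `N_λ F_λ`.
-/

open scoped BigOperators

noncomputable def CorbitFn {n : ℕ}
    (W : Subgroup (EuclideanSpace ℝ (Fin n) ≃ₗᵢ[ℝ] EuclideanSpace ℝ (Fin n)))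
    [Fintype W] (lam x : EuclideanSpace ℝ (Fin n)) : ℂ :=
  ∑ w : W, Complex.exp (2 * Real.pi * Complex.I *
    ((inner ℝ ((w : EuclideanSpace ℝ (Fin n) ≃ₗᵢ[ℝ] EuclideanSpace ℝ (Fin n)) lam) x : ℝ) : ℂ))

open ComplexConjugate

theorem Fintype.sum_sum_mul_mul_eq_sum_mul_sum {G R : Type*} [Group G] [Fintype G]
    [NonUnitalNonAssocSemiring R] (A B : G → R) :
    ∑ w, ∑ v, A (w * v) * B v = (∑ g, A g) * ∑ g, B g := by
  calc ∑ w, ∑ v, A (w * v) * B v = ∑ v, (∑ w, A (w * v)) * B v := by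
        rw [Finset.sum_comm]
        simp only [Finset.sum_mul]
    _ = ∑ v, (∑ g, A g) * B v := by
        refine Finset.sum_congr rfl fun v _ => ?_
        rw [Fintype.sum_equiv (Equiv.mulRight v) (fun w => A (w * v)) A fun _ => rfl]
    _ = (∑ g, A g) * ∑ g, B g := Finset.mul_sum .. |>.symm

theorem Complex.exp_two_pi_I_mul_sub_eq_mul_conj (a b : ℝ) :
    exp (2 * Real.pi * I * ((a - b : ℝ) : ℂ)) =
      exp (2 * Real.pi * I * a) * conj (exp (2 * Real.pi * I * b)) := by
  rw [← Complex.exp_conj, ← Complex.exp_add]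
  congr 1
  simp only [map_mul, conj_I, conj_ofReal, map_ofNat]
  push_cast
  ring

theorem CorbitFn_sum_sub_apply_eq_mul_conj {n : ℕ}
    (W : Subgroup (EuclideanSpace ℝ (Fin n) ≃ₗᵢ[ℝ] EuclideanSpace ℝ (Fin n))) [Fintype W]
    (lam u x : EuclideanSpace ℝ (Fin n)) :
    ∑ w : W, CorbitFn W lam (u - w.1 x) = CorbitFn W lam u * conj (CorbitFn W lam x) := by
  simp only [CorbitFn, map_sum]
  rw [← Fintype.sum_sum_mul_mul_eq_sum_mul_sum]
  refine Finset.sum_congr rfl fun w _ => ?_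
  refine (Fintype.sum_equiv (Equiv.mulLeft w) _ _ fun v => ?_).symm
  rw [inner_sub_right, Complex.exp_two_pi_I_mul_sub_eq_mul_conj]
  simp [LinearIsometryEquiv.inner_map_map]

open Classical in
theorem C_orbit_convolution_theorem_general {n : ℕ}
    (W : Subgroup (EuclideanSpace ℝ (Fin n) ≃ₗᵢ[ℝ] EuclideanSpace ℝ (Fin n)))
    [Fintype W]
    (FM : Finset (EuclideanSpace ℝ (Fin n)))
    (Λ : Finset (EuclideanSpace ℝ (Fin n)))
    (ε : EuclideanSpace ℝ (Fin n) → ℝ)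
    (N : EuclideanSpace ℝ (Fin n) → ℝ) (hN : ∀ lam ∈ Λ, 0 < N lam)
    (f : EuclideanSpace ℝ (Fin n) → ℂ)
    -- orbit transform coefficients of `f` and `g`
    (F G : EuclideanSpace ℝ (Fin n) → ℂ)
    (hF : ∀ lam ∈ Λ,
      F lam = (1 / (N lam : ℂ)) * ∑ x ∈ FM, (ε x : ℂ) * f x * (starRingEnd ℂ) (CorbitFn W lam x))
    -- the interpolation of `g` by `C`-orbit functions
    (gI : EuclideanSpace ℝ (Fin n) → ℂ)
    (hgI : ∀ y, gI y = ∑ lam ∈ Λ, G lam * CorbitFn W lam y)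
    (u : EuclideanSpace ℝ (Fin n)) :
    (∑ x ∈ FM, (ε x : ℂ) * ∑ w : W,
        f x * gI (u - (w : EuclideanSpace ℝ (Fin n) ≃ₗᵢ[ℝ] EuclideanSpace ℝ (Fin n)) x)) =
      ∑ lam ∈ Λ, (N lam : ℂ) * F lam * G lam * CorbitFn W lam u := by
  have hgI_orbit : ∀ x, ∑ w : W, gI (u - w.1 x) =
      ∑ lam ∈ Λ, G lam * CorbitFn W lam u * conj (CorbitFn W lam x) := fun x => by
    simp only [hgI, mul_assoc, ← CorbitFn_sum_sub_apply_eq_mul_conj, Finset.mul_sum]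
    exact Finset.sum_comm
  have hcoeff : ∀ lam ∈ Λ,
      ∑ x ∈ FM, (ε x : ℂ) * f x * conj (CorbitFn W lam x) = N lam * F lam := fun lam hlam => by
    rw [hF lam hlam, ← mul_assoc, mul_one_div_cancel (by exact_mod_cast (hN lam hlam).ne'), one_mul]
  calc _ = ∑ x ∈ FM, ∑ lam ∈ Λ,
        (ε x : ℂ) * f x * (G lam * CorbitFn W lam u * conj (CorbitFn W lam x)) :=
        Finset.sum_congr rfl fun x _ => by
          rw [← Finset.mul_sum, hgI_orbit, ← mul_assoc, Finset.mul_sum]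
    _ = ∑ lam ∈ Λ, G lam * CorbitFn W lam u *
        ∑ x ∈ FM, (ε x : ℂ) * f x * conj (CorbitFn W lam x) := by
        rw [Finset.sum_comm]
        simp only [Finset.mul_sum]
        exact Finset.sum_congr rfl fun lam _ => Finset.sum_congr rfl fun x _ => by ring
    _ = _ := Finset.sum_congr rfl fun lam hlam => by rw [hcoeff lam hlam]; ring

open Classical in
/-- The `C`-orbit convolution theorem (abstract form). -/
theorem C_orbit_convolution_theorem {n : ℕ}
    (W : Subgroup (EuclideanSpace ℝ (Fin n) ≃ₗᵢ[ℝ] EuclideanSpace ℝ (Fin n)))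
    [Fintype W]
    (FM : Finset (EuclideanSpace ℝ (Fin n)))
    (Λ : Finset (EuclideanSpace ℝ (Fin n)))
    (ε : EuclideanSpace ℝ (Fin n) → ℝ) (hε : ∀ x ∈ FM, 0 < ε x)
    (N : EuclideanSpace ℝ (Fin n) → ℝ) (hN : ∀ lam ∈ Λ, 0 < N lam)
    (horth : ∀ lam ∈ Λ, ∀ mu ∈ Λ,
      ∑ x ∈ FM, (ε x : ℂ) * CorbitFn W lam x * (starRingEnd ℂ) (CorbitFn W mu x) =
        if lam = mu then (N lam : ℂ) else 0)
    (f g : EuclideanSpace ℝ (Fin n) → ℂ)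
    -- orbit transform coefficients of `f` and `g`
    (F G : EuclideanSpace ℝ (Fin n) → ℂ)
    (hF : ∀ lam ∈ Λ,
      F lam = (1 / (N lam : ℂ)) * ∑ x ∈ FM, (ε x : ℂ) * f x * (starRingEnd ℂ) (CorbitFn W lam x))
    (hG : ∀ lam ∈ Λ,
      G lam = (1 / (N lam : ℂ)) * ∑ x ∈ FM, (ε x : ℂ) * g x * (starRingEnd ℂ) (CorbitFn W lam x))
    -- the interpolation of `g` by `C`-orbit functions
    (gI : EuclideanSpace ℝ (Fin n) → ℂ)
    (hgI : ∀ y, gI y = ∑ lam ∈ Λ, G lam * CorbitFn W lam y)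
    (u : EuclideanSpace ℝ (Fin n)) :
    (∑ x ∈ FM, (ε x : ℂ) * ∑ w : W,
        f x * gI (u - (w : EuclideanSpace ℝ (Fin n) ≃ₗᵢ[ℝ] EuclideanSpace ℝ (Fin n)) x)) =
      ∑ lam ∈ Λ, (N lam : ℂ) * F lam * G lam * CorbitFn W lam u :=
  C_orbit_convolution_theorem_general W FM Λ ε N hN f F G hF gI hgI u
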